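/- arXiv:2602.15282 — 2 statements merged into one kernel-verified Lean document; each statement's English description precedes it below -/
import Mathlib

section
/- Let $V: [0,\infty) \to \mathbf{R}$ be differentiable with $V(0) = 0$ and $V(t) \geq 0$ for all $t$. Suppose there exist signals $e, d \in L^2([0,\infty), \mathbf{R}^m)$, $z \in L^2_{loc}$, a symmetric matrix $W$, and $\gamma > 0$ such that for almost every $t$: $\dot{V}(t) + z(t)^T W z(t) + \frac{1}{\gamma} e(t)^T e(t) - \gamma\, d(t)^T d(t) \leq 0$, and the hard IQC condition $\int_0^T z(t)^T W z(t)\, dt \geq 0$ holds for all $T \geq 0$. Then $\|e\|_2 \leq \gamma \|d\|_2$. -/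
open MeasureTheory Matrix Set Filter intervalIntegral

theorem integral_le_sub_of_hasDerivAt_of_ae_add_nonpos {V V' s : ℝ → ℝ} {a b : ℝ} (hab : a ≤ b)
    (hV : ∀ t ∈ uIcc a b, HasDerivAt V (V' t) t) (hV' : IntervalIntegrable V' volume a b)
    (hs : IntervalIntegrable s volume a b)
    (hdiss : ∀ᵐ t ∂volume.restrict (Icc a b), V' t + s t ≤ 0) :
    ∫ t in a..b, s t ≤ V a - V b := by
  have hmono : ∫ t in a..b, s t ≤ ∫ t in a..b, -V' t :=
    integral_mono_ae_restrict hab hs hV'.neg <| by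
      filter_upwards [hdiss] with t ht
      linarith
  rwa [intervalIntegral.integral_neg, integral_eq_sub_of_hasDerivAt hV hV', neg_sub] at hmono

theorem IntegrableOn.intervalIntegrable_of_Ici {f : ℝ → ℝ} {a b : ℝ} (hab : a ≤ b)
    (hf : IntegrableOn f (Ici a)) : IntervalIntegrable f volume a b :=
  (hf.mono_set (uIcc_of_le hab ▸ Icc_subset_Ici_self)).intervalIntegrable

theorem intervalIntegral_le_setIntegral_Ici {f : ℝ → ℝ} {a b : ℝ} (hab : a ≤ b)
    (hf : IntegrableOn f (Ici a)) (hf_nonneg : ∀ t, 0 ≤ f t) :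
    ∫ t in a..b, f t ≤ ∫ t in Ici a, f t := by
  rw [integral_of_le hab]
  exact setIntegral_mono_set hf (.of_forall hf_nonneg)
    (Ioc_subset_Icc_self.trans Icc_subset_Ici_self).eventuallyLE

theorem setIntegral_Ici_le_of_forall_intervalIntegral_le {f : ℝ → ℝ} {a C : ℝ}
    (hf : IntegrableOn f (Ici a)) (hC : ∀ b, a ≤ b → ∫ t in a..b, f t ≤ C) :
    ∫ t in Ici a, f t ≤ C := by
  rw [integral_Ici_eq_integral_Ioi]
  exact le_of_tendsto (intervalIntegral_tendsto_integral_Ioi a (hf.mono_set Ioi_subset_Ici_self)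
    tendsto_id) (eventually_ge_atTop a |>.mono hC)

theorem dissipation_inequality_L2_gain_general
    {m p : ℕ} (V V' : ℝ → ℝ)
    (e d : ℝ → EuclideanSpace ℝ (Fin m)) (z : ℝ → Fin p → ℝ)
    (W : Matrix (Fin p) (Fin p) ℝ) (γ : ℝ)
    (hγ : 0 < γ)
    (hV : ∀ t, HasDerivAt V (V' t) t)
    (hV0 : V 0 = 0)
    (hVnonneg : ∀ t, 0 ≤ V t)
    (he : Integrable (fun t => ‖e t‖^2) (volume.restrict (Set.Ici (0:ℝ))))
    (hd : Integrable (fun t => ‖d t‖^2) (volume.restrict (Set.Ici (0:ℝ))))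
    (hzloc : ∀ T : ℝ, IntervalIntegrable (fun t => z t ⬝ᵥ W *ᵥ z t) volume 0 T)
    (hVloc : ∀ T : ℝ, IntervalIntegrable V' volume 0 T)
    (hdiss : ∀ᵐ t ∂(volume.restrict (Set.Ici (0:ℝ))),
      V' t + z t ⬝ᵥ W *ᵥ z t + (1/γ) * ‖e t‖^2 - γ * ‖d t‖^2 ≤ 0)
    (hhard : ∀ T : ℝ, 0 ≤ T → 0 ≤ ∫ t in (0:ℝ)..T, z t ⬝ᵥ W *ᵥ z t) :
    ∫ t in Set.Ici (0:ℝ), ‖e t‖^2 ≤ γ^2 * ∫ t in Set.Ici (0:ℝ), ‖d t‖^2 := by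
  refine setIntegral_Ici_le_of_forall_intervalIntegral_le he fun T hT => ?_
  have heT := IntegrableOn.intervalIntegrable_of_Ici hT he
  have hdT := IntegrableOn.intervalIntegrable_of_Ici hT hd
  have hdissT : ∀ᵐ t ∂volume.restrict (Icc 0 T),
      V' t + (z t ⬝ᵥ W *ᵥ z t + (1/γ) * ‖e t‖^2 - γ * ‖d t‖^2) ≤ 0 := by
    filter_upwards [ae_restrict_of_ae_restrict_of_subset Icc_subset_Ici_self hdiss] with t ht
    linarith
  have hsupply := integral_le_sub_of_hasDerivAt_of_ae_add_nonpos hT (fun t _ => hV t) (hVloc T)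
    (((hzloc T).add (heT.const_mul (1/γ))).sub (hdT.const_mul γ)) hdissT
  rw [integral_sub ((hzloc T).add (heT.const_mul _)) (hdT.const_mul _),
    integral_add (hzloc T) (heT.const_mul _), intervalIntegral.integral_const_mul,
    intervalIntegral.integral_const_mul] at hsupply
  have hdT_le := intervalIntegral_le_setIntegral_Ici hT hd fun t => sq_nonneg ‖d t‖
  have hbound : (1/γ) * ∫ t in (0:ℝ)..T, ‖e t‖^2 ≤ γ * ∫ t in Set.Ici (0:ℝ), ‖d t‖^2 := by
    linarith [hhard T hT, hVnonneg T, hV0, mul_le_mul_of_nonneg_left hdT_le hγ.le]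
  calc ∫ t in (0:ℝ)..T, ‖e t‖^2 = γ * ((1/γ) * ∫ t in (0:ℝ)..T, ‖e t‖^2) := by field_simp
    _ ≤ γ * (γ * ∫ t in Set.Ici (0:ℝ), ‖d t‖^2) := by gcongr
    _ = γ^2 * ∫ t in Set.Ici (0:ℝ), ‖d t‖^2 := by ring

theorem dissipation_inequality_L2_gain
    {m p : ℕ} (V V' : ℝ → ℝ)
    (e d : ℝ → EuclideanSpace ℝ (Fin m)) (z : ℝ → Fin p → ℝ)
    (W : Matrix (Fin p) (Fin p) ℝ) (γ : ℝ)
    (hγ : 0 < γ)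
    (hW : W.IsSymm)
    (hV : ∀ t, HasDerivAt V (V' t) t)
    (hV0 : V 0 = 0)
    (hVnonneg : ∀ t, 0 ≤ V t)
    (he : Integrable (fun t => ‖e t‖^2) (volume.restrict (Set.Ici (0:ℝ))))
    (hd : Integrable (fun t => ‖d t‖^2) (volume.restrict (Set.Ici (0:ℝ))))
    (hzloc : ∀ T : ℝ, IntervalIntegrable (fun t => z t ⬝ᵥ W *ᵥ z t) volume 0 T)
    (hVloc : ∀ T : ℝ, IntervalIntegrable V' volume 0 T)
    (hdiss : ∀ᵐ t ∂(volume.restrict (Set.Ici (0:ℝ))),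
      V' t + z t ⬝ᵥ W *ᵥ z t + (1/γ) * ‖e t‖^2 - γ * ‖d t‖^2 ≤ 0)
    (hhard : ∀ T : ℝ, 0 ≤ T → 0 ≤ ∫ t in (0:ℝ)..T, z t ⬝ᵥ W *ᵥ z t) :
    ∫ t in Set.Ici (0:ℝ), ‖e t‖^2 ≤ γ^2 * ∫ t in Set.Ici (0:ℝ), ‖d t‖^2 :=
  dissipation_inequality_L2_gain_general V V' e d z W γ hγ hV hV0 hVnonneg he hd hzloc hVloc hdiss
    hhard
end

section
/- Let $M \in \mathbf{S}^n$, $B \in \mathbf{R}^{n \times m}$, $C \in \mathbf{R}^{p \times n}$. There exists $K \in \mathbf{R}^{m \times p}$ such that $M + B K C + (B K C)^T \prec 0$ if and only if $N_B^T M N_B \prec 0$ and $N_C^T M N_C \prec 0$, where the columns of $N_B$ and $N_C$ are bases for $\ker(B^T)$ and $\ker(C)$ respectively (with the convention that a condition is vacuous if the corresponding kernel is trivial). -/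
/-!
Necessity: `xᵀ (B K C) x = (Bᵀ x)ᵀ K (C x)` vanishes on `ker Bᵀ` and on `ker C`.

Sufficiency: by Finsler's lemma (compactness of the unit sphere) there is `ρ ≥ 0` with
`G = ρ B Bᵀ - M ≻ 0`. Split `x = v + u` with `v ∈ ker C` and `u` in the `G`-orthogonal complement
of `ker C`. As `C` is injective on that complement, some linear `L` satisfies `L (C u) = u`, and
`K = -ρ Bᵀ L` gives `B K C x = -ρ B Bᵀ u`, whence
`xᵀ (M + B K C + (B K C)ᵀ) x = vᵀ M v - uᵀ G u - ρ ‖Bᵀ u‖² < 0`.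
-/

open Matrix

theorem LinearMap.exists_leftInvOn_of_disjoint_ker {K V W : Type*} [Field K] [AddCommGroup V]
    [Module K V] [AddCommGroup W] [Module K W] (f : V →ₗ[K] W) {U : Submodule K V}
    (h : Disjoint U (LinearMap.ker f)) : ∃ L : W →ₗ[K] V, Set.LeftInvOn L f U := by
  obtain ⟨L, hL⟩ := (f ∘ₗ U.subtype).exists_leftInverse_of_injective
    (by rwa [LinearMap.ker_comp, ← Submodule.disjoint_iff_comap_eq_bot])
  exact ⟨U.subtype ∘ₗ L, fun u hu ↦ congrArg Subtype.val (LinearMap.congr_fun hL ⟨u, hu⟩)⟩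

namespace Matrix

variable {n m p : Type*} [Fintype n] [Fintype m] [Fintype p]

theorem dotProduct_add_add_transpose_mulVec {α : Type*} [CommRing α] (M A : Matrix n n α)
    (x : n → α) : x ⬝ᵥ (M + A + Aᵀ) *ᵥ x = x ⬝ᵥ M *ᵥ x + 2 * (x ⬝ᵥ A *ᵥ x) := by
  rw [add_mulVec, add_mulVec, dotProduct_add, dotProduct_add, dotProduct_transpose_mulVec]
  ring

theorem dotProduct_mul_mul_mulVec {α : Type*} [CommRing α] (B : Matrix n m α)
    (K : Matrix m p α) (C : Matrix p n α) (x : n → α) :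
    x ⬝ᵥ (B * K * C) *ᵥ x = (Bᵀ *ᵥ x) ⬝ᵥ K *ᵥ (C *ᵥ x) := by
  rw [← mulVec_mulVec, ← mulVec_mulVec, dotProduct_mulVec, mulVec_transpose]

theorem dotProduct_smul_mulVec_smul {α : Type*} [CommRing α] (A : Matrix n n α) (t : α)
    (x : n → α) : (t • x) ⬝ᵥ A *ᵥ (t • x) = t ^ 2 * (x ⬝ᵥ A *ᵥ x) := by
  rw [mulVec_smul, smul_dotProduct, dotProduct_smul, smul_eq_mul, smul_eq_mul]
  ring

theorem posDef_iff_isSymm_and_dotProduct_mulVec_pos {A : Matrix n n ℝ} :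
    A.PosDef ↔ A.IsSymm ∧ ∀ x ≠ 0, 0 < x ⬝ᵥ A *ᵥ x := by
  simp [posDef_iff_dotProduct_mulVec]

theorem posDef_neg_iff {A : Matrix n n ℝ} :
    (-A).PosDef ↔ A.IsSymm ∧ ∀ x ≠ 0, x ⬝ᵥ A *ᵥ x < 0 := by
  simp [posDef_iff_isSymm_and_dotProduct_mulVec_pos, IsSymm, neg_mulVec]

theorem PosSemidef.exists_posDef_smul_sub {R M : Matrix n n ℝ} (hR : R.PosSemidef)
    (hM : M.IsSymm) (h : ∀ x, x ⬝ᵥ R *ᵥ x = 0 → x ≠ 0 → x ⬝ᵥ M *ᵥ x < 0) :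
    ∃ ρ : ℝ, 0 ≤ ρ ∧ (ρ • R - M).PosDef := by
  set f : (n → ℝ) → ℝ := fun x ↦ x ⬝ᵥ M *ᵥ x
  set g : (n → ℝ) → ℝ := fun x ↦ x ⬝ᵥ R *ᵥ x
  have hf : Continuous f := by fun_prop
  have hg : Continuous g := by fun_prop
  have hg_nonneg (x) : 0 ≤ g x := by simpa using hR.dotProduct_mulVec_nonneg x
  set S := Metric.sphere (0 : n → ℝ) 1 ∩ {x | 0 ≤ f x}
  have hS : IsCompact S := (isCompact_sphere 0 1).inter_right (isClosed_le continuous_const hf)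
  have hg_pos : ∀ x ∈ S, 0 < g x := fun x ⟨hx1, hx2⟩ ↦ (hg_nonneg x).lt_of_ne fun h0 ↦
    (h x h0.symm (ne_zero_of_mem_unit_sphere ⟨x, hx1⟩)).not_ge hx2
  -- Off `S` the sphere has `f < 0 ≤ ρ g`; on the compact set `S` the ratio `f / g` is bounded.
  obtain ⟨c, hc⟩ :=
    hS.bddAbove_image (hf.continuousOn.div hg.continuousOn fun x hx ↦ (hg_pos x hx).ne')
  set ρ := max c 0 + 1
  have hρ : ∀ y : n → ℝ, ‖y‖ = 1 → f y < ρ * g y := by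
    intro y hy
    by_cases hfy : 0 ≤ f y
    · have hyS : y ∈ S := ⟨by simpa using hy, hfy⟩
      rw [← div_lt_iff₀ (hg_pos y hyS)]
      exact (hc ⟨y, hyS, rfl⟩).trans_lt (by simp [ρ]; linarith [le_max_left c 0])
    · exact (not_le.mp hfy).trans_le (mul_nonneg (by positivity) (hg_nonneg y))
  refine ⟨ρ, by positivity, posDef_iff_isSymm_and_dotProduct_mulVec_pos.mpr ⟨?_, fun x hx ↦ ?_⟩⟩
  · simp [IsSymm, hM.eq, (isHermitian_iff_isSymm.mp hR.isHermitian).eq]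
  · have hx' : 0 < ‖x‖ := norm_pos_iff.mpr hx
    have hy : ‖‖x‖⁻¹ • x‖ = 1 := by rw [norm_smul, norm_inv, norm_norm, inv_mul_cancel₀ hx'.ne']
    have key := hρ _ hy
    simp only [f, g, dotProduct_smul_mulVec_smul] at key
    rw [sub_mulVec, smul_mulVec, dotProduct_sub, dotProduct_smul, smul_eq_mul, sub_pos]
    have : 0 < (‖x‖⁻¹) ^ 2 := by positivity
    nlinarith

theorem PosDef.isCompl_orthogonal [DecidableEq n] {G : Matrix n n ℝ} (hG : G.PosDef)
    (W : Submodule ℝ (n → ℝ)) :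
    IsCompl W (LinearMap.BilinForm.orthogonal (toLinearMap₂' ℝ G) W) := by
  have hGs : G.IsSymm := isHermitian_iff_isSymm.mp hG.isHermitian
  refine (LinearMap.BilinForm.isCompl_orthogonal_iff_disjoint fun x y hxy ↦ ?_).mpr ?_
  · rwa [toLinearMap₂'_apply', ← hGs.eq, dotProduct_transpose_mulVec, ← toLinearMap₂'_apply']
  · refine Submodule.disjoint_def.mpr fun x hxW hx ↦ by_contra fun hx0 ↦ ?_
    have := (posDef_iff_isSymm_and_dotProduct_mulVec_pos.mp hG).2 x hx0
    rw [← toLinearMap₂'_apply', hx x hxW] at this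
    exact this.false

theorem dotProduct_mulVec_add_add_transpose_lt_zero {M P N : Matrix n n ℝ} (hM : M.IsSymm)
    (hP : P.PosSemidef) (hG : (P - M).PosDef) {u v : n → ℝ} (huv : v + u ≠ 0)
    (horth : v ⬝ᵥ (P - M) *ᵥ u = 0) (hv : v ≠ 0 → v ⬝ᵥ M *ᵥ v < 0)
    (hN : N *ᵥ (v + u) = -P *ᵥ u) :
    (v + u) ⬝ᵥ (M + N + Nᵀ) *ᵥ (v + u) < 0 := by
  have hMuv : u ⬝ᵥ M *ᵥ v = v ⬝ᵥ M *ᵥ u := by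
    rw [← dotProduct_transpose_mulVec, hM.eq]
  have hsplit : (v + u) ⬝ᵥ (M + N + Nᵀ) *ᵥ (v + u) =
      v ⬝ᵥ M *ᵥ v - u ⬝ᵥ (P - M) *ᵥ u - u ⬝ᵥ P *ᵥ u := by
    rw [dotProduct_add_add_transpose_mulVec, hN]
    simp only [sub_mulVec, neg_mulVec, mulVec_add, dotProduct_add, add_dotProduct,
      dotProduct_sub, dotProduct_neg] at horth ⊢
    linarith
  have hPu : 0 ≤ u ⬝ᵥ P *ᵥ u := by simpa using hP.dotProduct_mulVec_nonneg u
  rw [hsplit]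
  by_cases hu : u = 0
  · subst hu
    simpa using hv (by simpa using huv)
  · have hGu := (posDef_iff_isSymm_and_dotProduct_mulVec_pos.mp hG).2 u hu
    have hMv : v ⬝ᵥ M *ᵥ v ≤ 0 := by
      by_cases hv0 : v = 0
      · simp [hv0]
      · exact (hv hv0).le
    linarith

theorem exists_posDef_neg_add_mul_mul_add_transpose [DecidableEq n] [DecidableEq p]
    {M : Matrix n n ℝ} {B : Matrix n m ℝ} {C : Matrix p n ℝ} (hM : M.IsSymm)
    (hB : ∀ x : n → ℝ, Bᵀ *ᵥ x = 0 → x ≠ 0 → x ⬝ᵥ M *ᵥ x < 0)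
    (hC : ∀ x : n → ℝ, C *ᵥ x = 0 → x ≠ 0 → x ⬝ᵥ M *ᵥ x < 0) :
    ∃ K : Matrix m p ℝ, (-(M + B * K * C + (B * K * C)ᵀ)).PosDef := by
  have hBBt (x : n → ℝ) : x ⬝ᵥ (B * Bᵀ) *ᵥ x = (Bᵀ *ᵥ x) ⬝ᵥ (Bᵀ *ᵥ x) := by
    rw [← mulVec_mulVec, dotProduct_mulVec, ← mulVec_transpose]
  have hP : (B * Bᵀ).PosSemidef := by
    simpa using posSemidef_self_mul_conjTranspose B
  obtain ⟨ρ, hρ, hG⟩ := hP.exists_posDef_smul_sub hM fun x h0 ↦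
    hB x (dotProduct_self_eq_zero.mp ((hBBt x).symm.trans h0))
  have hcompl := hG.isCompl_orthogonal (LinearMap.ker C.mulVecLin)
  obtain ⟨L, hL⟩ := C.mulVecLin.exists_leftInvOn_of_disjoint_ker hcompl.symm.disjoint
  refine ⟨-ρ • (Bᵀ * L.toMatrix'), posDef_neg_iff.mpr ⟨?_, fun x hx ↦ ?_⟩⟩
  · rw [add_assoc]
    exact hM.add (isSymm_add_transpose_self _)
  obtain ⟨v, hv, u, hu, rfl⟩ :=
    Submodule.mem_sup.mp (hcompl.sup_eq_top.ge (Submodule.mem_top (x := x)))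
  rw [LinearMap.mem_ker, mulVecLin_apply] at hv
  refine dotProduct_mulVec_add_add_transpose_lt_zero hM (hP.smul hρ) hG hx ?_ (hC v hv) ?_
  · rw [← toLinearMap₂'_apply']
    exact hu v (by simpa using hv)
  · have hLu : L (C *ᵥ u) = u := hL hu
    rw [← mulVec_mulVec, ← mulVec_mulVec, mulVec_add, hv, zero_add, smul_mulVec,
      ← mulVec_mulVec, LinearMap.toMatrix'_mulVec, hLu, mulVec_smul, neg_mulVec, smul_mulVec,
      mulVec_mulVec, neg_smul]

end Matrix

theorem elimination_lemma
    {n m p : ℕ} (M : Matrix (Fin n) (Fin n) ℝ)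
    (B : Matrix (Fin n) (Fin m) ℝ) (C : Matrix (Fin p) (Fin n) ℝ)
    (hM : M.IsSymm) :
    (∃ K : Matrix (Fin m) (Fin p) ℝ,
        (-(M + B * K * C + (B * K * C)ᵀ)).PosDef) ↔
      ((∀ x : Fin n → ℝ, Bᵀ *ᵥ x = 0 → x ≠ 0 → x ⬝ᵥ M *ᵥ x < 0) ∧
       (∀ x : Fin n → ℝ, C *ᵥ x = 0 → x ≠ 0 → x ⬝ᵥ M *ᵥ x < 0)) := by
  refine ⟨fun ⟨K, hK⟩ ↦ ?_, fun ⟨hB, hC⟩ ↦ exists_posDef_neg_add_mul_mul_add_transpose hM hB hC⟩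
  have hneg (x : Fin n → ℝ) (hx : x ≠ 0) (h0 : x ⬝ᵥ (B * K * C) *ᵥ x = 0) : x ⬝ᵥ M *ᵥ x < 0 := by
    have := (posDef_neg_iff.mp hK).2 x hx
    rwa [dotProduct_add_add_transpose_mulVec, h0, mul_zero, add_zero] at this
  constructor
  · intro x hBx hx
    exact hneg x hx (by simp [dotProduct_mul_mul_mulVec, hBx])
  · intro x hCx hx
    exact hneg x hx (by simp [dotProduct_mul_mul_mulVec, hCx])
end
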